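/- For all real numbers h, e with 0 ≤ h ≤ e ≤ 1 and e > 0, the rMPE value dominates the Bayesian implication value: 1 - (1 - h)(e - h) ≥ h / e. (For implications of E by H, all results of the rMPE method are at least as high as the results h/e of Bayes' theorem (6c) for the same initial values.) -/

import Mathlib

section OrderedRing

variable {R : Type*} [CommRing R] [PartialOrder R] [IsOrderedRing R]

def rMPE (h e : R) : R := 1 - (1 - h) * (e - h)

theorem rMPE_nonneg {h e : R} (h0 : 0 ≤ h) (hhe : h ≤ e) (he1 : e ≤ 1) : 0 ≤ rMPE h e :=
  sub_nonneg.2 <| mul_le_one₀ (sub_le_self 1 h0) (sub_nonneg.2 hhe) ((sub_le_self e h0).trans he1)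

theorem le_rMPE_mul {h e : R} (h0 : 0 ≤ h) (hhe : h ≤ e) (he1 : e ≤ 1) : h ≤ rMPE h e * e := by
  have factor : rMPE h e * e - h = (e - h) * (1 - e * (1 - h)) := by
    unfold rMPE
    ring
  have he_one_sub : e * (1 - h) ≤ 1 :=
    mul_le_one₀ he1 (sub_nonneg.2 (hhe.trans he1)) (sub_le_self 1 h0)
  refine sub_nonneg.1 ?_
  rw [factor]
  exact mul_nonneg (sub_nonneg.2 hhe) (sub_nonneg.2 he_one_sub)

end OrderedRing

theorem rMPE_ge_bayes_general (h e : ℝ) (h0 : 0 ≤ h) (hhe : h ≤ e) (he1 : e ≤ 1) :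
    h / e ≤ 1 - (1 - h) * (e - h) :=
  div_le_of_le_mul₀ (h0.trans hhe) (rMPE_nonneg h0 hhe he1) (le_rMPE_mul h0 hhe he1)

/-- The rMPE value (formula (7)) dominates the Bayesian implication value
`h / e` of formula (6c). -/
theorem rMPE_ge_bayes (h e : ℝ) (h0 : 0 ≤ h) (hhe : h ≤ e) (he1 : e ≤ 1)
    (hepos : 0 < e) :
    h / e ≤ 1 - (1 - h) * (e - h) :=
  rMPE_ge_bayes_general h e h0 hhe he1
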